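/- Let n ≥ 2, m ≥ 1, let λ be any family of integers, and let G = G(n,m,λ) be the τ₂-presented group. Then G is a τ₂-group, and (a_1,…,a_n; c_1,…,c_m) is a Malcev basis of G: the subgroup ⟨C⟩ generated by c_1,…,c_m is free abelian with basis {c_1,…,c_m}, G' ≤ ⟨C⟩ ≤ Z(G), and G/⟨C⟩ is free abelian with basis the images of a_1,…,a_n. -/

import Mathlib

open scoped commutatorElement

/-- Old Mathlib's `Monoid.IsTorsionFree` (removed since): no nontrivial element has finite order. -/
def Monoid.IsTorsionFree (G : Type*) [Monoid G] : Prop :=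
  ∀ g : G, g ≠ 1 → ¬IsOfFinOrder g

noncomputable def grpRank (G : Type*) [Group G] : ℕ :=
  sInf {k : ℕ | ∃ S : Finset G, S.card = k ∧ Subgroup.closure (S : Set G) = ⊤}

def IsTau2 (G : Type*) [Group G] : Prop :=
  Group.FG G ∧ Monoid.IsTorsionFree G ∧ ∀ g h : G, ⁅g, h⁆ ∈ Subgroup.center G

def prodPow {G : Type*} [Group G] {k : ℕ} (v : Fin k → G) (e : Fin k → ℤ) : G :=
  (List.ofFn fun i => v i ^ e i).prod

def tau2Rels (n m : ℕ) (lam : Fin m → Fin n → Fin n → ℤ) :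
    Set (FreeGroup (Fin n ⊕ Fin m)) :=
  {r | (∃ i j : Fin n, i < j ∧
          r = ⁅(FreeGroup.of (Sum.inl i) : FreeGroup (Fin n ⊕ Fin m)),
              FreeGroup.of (Sum.inl j)⁆ *
              (prodPow (fun t : Fin m => FreeGroup.of (Sum.inr t)) (fun t => lam t i j))⁻¹) ∨
       (∃ (i : Fin n) (t : Fin m), r = ⁅(FreeGroup.of (Sum.inl i) : FreeGroup (Fin n ⊕ Fin m)),
              FreeGroup.of (Sum.inr t)⁆) ∨
       (∃ t s : Fin m, r = ⁅(FreeGroup.of (Sum.inr t) : FreeGroup (Fin n ⊕ Fin m)),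
              FreeGroup.of (Sum.inr s)⁆)}

def Tau2Group (n m : ℕ) (lam : Fin m → Fin n → Fin n → ℤ) : Type :=
  PresentedGroup (tau2Rels n m lam)

instance (n m : ℕ) (lam : Fin m → Fin n → Fin n → ℤ) : Group (Tau2Group n m lam) :=
  inferInstanceAs (Group (PresentedGroup (tau2Rels n m lam)))

def tau2a {n m : ℕ} {lam : Fin m → Fin n → Fin n → ℤ} (i : Fin n) : Tau2Group n m lam :=
  PresentedGroup.of (Sum.inl i)

def tau2c {n m : ℕ} {lam : Fin m → Fin n → Fin n → ℤ} (t : Fin m) : Tau2Group n m lam :=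
  PresentedGroup.of (Sum.inr t)

def IsCSmall {G : Type*} [Group G] (g : G) : Prop :=
  ∀ x : G, x ∈ Subgroup.centralizer {g} ↔
    ∃ (t : ℤ) (z : G), z ∈ Subgroup.center G ∧ x = g ^ t * z

def IsMalcevBasis {G : Type*} [Group G] {n m : ℕ} (a : Fin n → G) (c : Fin m → G) : Prop :=
  (∀ t, c t ∈ Subgroup.center G) ∧
  (commutator G ≤ Subgroup.closure (Set.range c)) ∧
  (∀ g : G, ∃! p : (Fin n → ℤ) × (Fin m → ℤ), g = prodPow a p.1 * prodPow c p.2)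

/-!
The relations make each `c_t` central and each `⁅a_i, a_j⁆` a word in the `c`'s, so the `a_i`
commute modulo `⟨C⟩`; as `⟨C⟩` and `G ⧸ ⟨C⟩` are then abelian groups generated by the `c_t`, resp.
the images of the `a_i`, every element of `G` has the form `a^α c^γ` and `G' ≤ ⟨C⟩ ≤ Z(G)`.

Uniqueness of `(α, γ)` and torsion-freeness come from a concrete model: `ℤⁿ × ℤᵐ` with product
`(α, γ)(α', γ') = (α + α', γ + γ' + B(α, α'))` for the biadditive `B` with `B(eᵢ, eⱼ) = λ_{·ij}`
if `i < j` and `0` otherwise. There `⁅(eᵢ, 0), (eⱼ, 0)⁆ = (0, λ_{·ij})`, so `a_i ↦ (eᵢ, 0)`,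
`c_t ↦ (0, e_t)` respects the relations, and `a^α c^γ` maps to an element `(α, _) · (0, γ)`, from
which `(α, γ)` can be read off. The model is torsion-free, and the map is injective by the normal
form.
-/

section prodPow
variable {G H : Type*} [Group G] [Group H] {k : ℕ}

@[simp]
theorem prodPow_zero (v : Fin k → G) : prodPow v 0 = 1 := by
  simp [prodPow]

theorem prodPow_succ (v : Fin (k + 1) → G) (e : Fin (k + 1) → ℤ) :
    prodPow v e = v 0 ^ e 0 * prodPow (fun i => v i.succ) (fun i => e i.succ) := by
  simp [prodPow, List.ofFn_succ]

theorem map_prodPow (φ : G →* H) (v : Fin k → G) (e : Fin k → ℤ) :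
    φ (prodPow v e) = prodPow (φ ∘ v) e := by
  simp [prodPow, map_list_prod, List.map_ofFn, Function.comp_def]

theorem prodPow_eq_prod {M : Type*} [CommGroup M] (v : Fin k → M) (e : Fin k → ℤ) :
    prodPow v e = ∏ i, v i ^ e i :=
  List.prod_ofFn

theorem prodPow_mem {S : Subgroup G} {v : Fin k → G} (hv : ∀ i, v i ∈ S) (e : Fin k → ℤ) :
    prodPow v e ∈ S :=
  list_prod_mem <| by simpa [List.mem_ofFn] using fun i => zpow_mem (hv i) (e i)

theorem prodPow_single (v : Fin k → G) (i : Fin k) (s : ℤ) :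
    prodPow v (Pi.single i s) = v i ^ s := by
  induction k with
  | zero => exact i.elim0
  | succ k ih =>
    rw [prodPow_succ]
    cases i using Fin.cases with
    | zero =>
      rw [show (fun i : Fin k => (Pi.single 0 s : Fin (k + 1) → ℤ) i.succ) = 0 from
        funext fun i => Pi.single_eq_of_ne (Fin.succ_ne_zero i) s]
      rw [prodPow_zero, mul_one, Pi.single_eq_same]
    | succ j =>
      rw [show (fun i : Fin k => (Pi.single j.succ s : Fin (k + 1) → ℤ) i.succ) = Pi.single j s from
        funext fun i => by simp [Pi.single_apply]]
      rw [ih, Pi.single_eq_of_ne (Fin.succ_ne_zero j).symm, zpow_zero, one_mul]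

theorem prodPow_add {v : Fin k → G} (hv : ∀ i j, Commute (v i) (v j)) (e e' : Fin k → ℤ) :
    prodPow v (e + e') = prodPow v e * prodPow v e' := by
  induction k with
  | zero => simp [prodPow]
  | succ k ih =>
    have hcomm : Commute (prodPow (fun i => v i.succ) (fun i => e i.succ)) (v 0 ^ e' 0) :=
      Commute.list_prod_left _ _ <| by
        simpa [List.mem_ofFn] using fun i : Fin k => (hv i.succ 0).zpow_zpow _ _
    rw [prodPow_succ, prodPow_succ v e, prodPow_succ v e', Pi.add_apply, zpow_add,
      show (fun i : Fin k => (e + e') i.succ) = (fun i => e i.succ) + (fun i => e' i.succ) from rfl,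
      ih fun i j => hv _ _, mul_assoc (v 0 ^ e 0) (prodPow _ _),
      ← mul_assoc (prodPow _ _) (v 0 ^ e' 0), hcomm.eq]
    simp only [mul_assoc]

theorem prodPow_neg {v : Fin k → G} (hv : ∀ i j, Commute (v i) (v j)) (e : Fin k → ℤ) :
    prodPow v (-e) = (prodPow v e)⁻¹ :=
  eq_inv_of_mul_eq_one_left <| by rw [← prodPow_add hv, neg_add_cancel, prodPow_zero]

theorem exists_prodPow_eq_of_mem_closure {v : Fin k → G} (hv : ∀ i j, Commute (v i) (v j))
    {x : G} (hx : x ∈ Subgroup.closure (Set.range v)) : ∃ e, prodPow v e = x := by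
  induction hx using Subgroup.closure_induction with
  | mem x hx =>
    obtain ⟨i, rfl⟩ := hx
    exact ⟨Pi.single i 1, by rw [prodPow_single, zpow_one]⟩
  | one => exact ⟨0, prodPow_zero v⟩
  | mul x y _ _ hx hy =>
    obtain ⟨e, rfl⟩ := hx
    obtain ⟨e', rfl⟩ := hy
    exact ⟨e + e', prodPow_add hv e e'⟩
  | inv x _ hx =>
    obtain ⟨e, rfl⟩ := hx
    exact ⟨-e, prodPow_neg hv e⟩

end prodPow

@[ext]
structure CentralExtension {A C : Type*} [AddCommGroup A] [AddCommGroup C] (f : A →+ A →+ C) where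
  fst : A
  snd : C

namespace CentralExtension
variable {A C : Type*} [AddCommGroup A] [AddCommGroup C] {f : A →+ A →+ C}

instance : Group (CentralExtension f) where
  mul x y := ⟨x.fst + y.fst, x.snd + y.snd + f x.fst y.fst⟩
  one := ⟨0, 0⟩
  inv x := ⟨-x.fst, -x.snd + f x.fst x.fst⟩
  mul_assoc x y z := by
    ext
    · exact add_assoc _ _ _
    · show x.snd + y.snd + f x.fst y.fst + z.snd + f (x.fst + y.fst) z.fst
        = x.snd + (y.snd + z.snd + f y.fst z.fst) + f x.fst (y.fst + z.fst)
      simp only [map_add, AddMonoidHom.add_apply]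
      abel
  one_mul x := CentralExtension.ext (zero_add _) <| by
    show 0 + x.snd + f 0 x.fst = x.snd
    simp
  mul_one x := CentralExtension.ext (add_zero _) <| by
    show x.snd + 0 + f x.fst 0 = x.snd
    simp
  inv_mul_cancel x := by
    ext
    · exact neg_add_cancel x.fst
    · show -x.snd + f x.fst x.fst + x.snd + f (-x.fst) x.fst = 0
      simp only [map_neg, AddMonoidHom.neg_apply]
      abel

@[simp] theorem mul_fst (x y : CentralExtension f) : (x * y).fst = x.fst + y.fst := rfl
@[simp] theorem mul_snd (x y : CentralExtension f) :
    (x * y).snd = x.snd + y.snd + f x.fst y.fst := rfl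
@[simp] theorem one_fst : (1 : CentralExtension f).fst = 0 := rfl
@[simp] theorem one_snd : (1 : CentralExtension f).snd = 0 := rfl
@[simp] theorem mk_zero_zero : (⟨0, 0⟩ : CentralExtension f) = 1 := rfl
@[simp] theorem inv_fst (x : CentralExtension f) : x⁻¹.fst = -x.fst := rfl
@[simp] theorem inv_snd (x : CentralExtension f) : x⁻¹.snd = -x.snd + f x.fst x.fst := rfl

def fstHom : CentralExtension f →* Multiplicative A where
  toFun x := .ofAdd x.fst
  map_one' := rfl
  map_mul' _ _ := rfl

def inr : Multiplicative C →* CentralExtension f where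
  toFun c := ⟨0, c.toAdd⟩
  map_one' := rfl
  map_mul' _ _ := by ext <;> simp

theorem commutatorElement_eq (x y : CentralExtension f) :
    ⁅x, y⁆ = ⟨0, f x.fst y.fst - f y.fst x.fst⟩ := by
  ext
  · simp [commutatorElement_def]
  · simp [commutatorElement_def, map_add, map_neg]
    abel

theorem pow_fst (x : CentralExtension f) (k : ℕ) : (x ^ k).fst = k • x.fst :=
  congrArg Multiplicative.toAdd (map_pow fstHom x k)

theorem fst_prodPow {k : ℕ} (v : Fin k → CentralExtension f) (e : Fin k → ℤ) :
    (prodPow v e).fst = ∑ i, e i • (v i).fst := by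
  rw [← toAdd_ofAdd (prodPow v e).fst]
  exact congrArg Multiplicative.toAdd <| (map_prodPow fstHom v e).trans (prodPow_eq_prod _ e)

theorem prodPow_inr {k : ℕ} (w : Fin k → C) (e : Fin k → ℤ) :
    prodPow (fun i => (⟨0, w i⟩ : CentralExtension f)) e = ⟨0, ∑ i, e i • w i⟩ := by
  have := map_prodPow (inr (f := f)) (fun i => .ofAdd (w i)) e
  rw [prodPow_eq_prod] at this
  simpa [inr, Function.comp_def] using this.symm

theorem eq_one_of_pow_eq_one [IsAddTorsionFree A] [IsAddTorsionFree C] {x : CentralExtension f}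
    {k : ℕ} (hk : k ≠ 0) (hx : x ^ k = 1) : x = 1 := by
  have hfst : x.fst = 0 := by
    simpa [pow_fst, hk] using congrArg fst hx
  have hinr : x = inr (.ofAdd x.snd) := by ext <;> simp [inr, hfst]
  rw [hinr, ← map_pow] at hx
  have hsnd : x.snd = 0 := by
    simpa [inr, hk] using congrArg snd hx
  ext <;> simp [hfst, hsnd]

end CentralExtension

section GroupFacts
variable {G : Type*} [Group G]

theorem Subgroup.normal_of_le_center {N : Subgroup G} (h : N ≤ Subgroup.center G) : N.Normal :=
  ⟨fun z hz g => by rwa [Subgroup.mem_center_iff.1 (h hz) g, mul_inv_cancel_right]⟩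

theorem Subgroup.mem_center_of_commute_generators {s : Set G} (hs : Subgroup.closure s = ⊤)
    {g : G} (hg : ∀ x ∈ s, Commute x g) : g ∈ Subgroup.center G := by
  rw [← Subgroup.centralizer_univ, ← Subgroup.coe_top, ← hs, Subgroup.centralizer_closure]
  exact fun x hx => (hg x hx).eq

theorem PresentedGroup.commute_of_commutatorElement_mem {α : Type*} {rels : Set (FreeGroup α)}
    {x y : α} (h : ⁅FreeGroup.of x, FreeGroup.of y⁆ ∈ rels) :
    Commute (PresentedGroup.of (rels := rels) x) (PresentedGroup.of y) :=
  commutatorElement_eq_one_iff_commute.1 <|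
    (map_commutatorElement (PresentedGroup.mk rels) _ _).symm.trans (PresentedGroup.one_of_mem h)

theorem QuotientGroup.commute_mk_iff {N : Subgroup G} [N.Normal] {x y : G} :
    Commute (x : G ⧸ N) y ↔ ⁅x, y⁆ ∈ N := by
  rw [← commutatorElement_eq_one_iff_commute, ← QuotientGroup.eq_one_iff]
  exact Eq.congr_left (map_commutatorElement (QuotientGroup.mk' N) x y).symm

end GroupFacts

namespace Tau2Group
variable {n m : ℕ} {lam : Fin m → Fin n → Fin n → ℤ}

theorem commute_tau2a_tau2c (i : Fin n) (t : Fin m) : Commute (tau2a (lam := lam) i) (tau2c t) :=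
  PresentedGroup.commute_of_commutatorElement_mem (Or.inr (Or.inl ⟨i, t, rfl⟩))

theorem commute_tau2c (t s : Fin m) : Commute (tau2c (lam := lam) t) (tau2c s) :=
  PresentedGroup.commute_of_commutatorElement_mem (Or.inr (Or.inr ⟨t, s, rfl⟩))

theorem commutatorElement_tau2a {i j : Fin n} (hij : i < j) :
    ⁅tau2a (lam := lam) i, tau2a j⁆ = prodPow (tau2c (lam := lam)) fun t => lam t i j := by
  have := PresentedGroup.one_of_mem (rels := tau2Rels n m lam) (Or.inl ⟨i, j, hij, rfl⟩)
  rwa [map_mul, map_inv, map_commutatorElement, map_prodPow, mul_inv_eq_one] at this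

theorem tau2c_mem_center (t : Fin m) : tau2c (lam := lam) t ∈ Subgroup.center (Tau2Group n m lam) :=
  Subgroup.mem_center_of_commute_generators (PresentedGroup.closure_range_of _) <| by
    rintro _ ⟨i | s, rfl⟩
    exacts [commute_tau2a_tau2c i t, commute_tau2c s t]

def subgroupC (n m : ℕ) (lam : Fin m → Fin n → Fin n → ℤ) : Subgroup (Tau2Group n m lam) :=
  Subgroup.closure (Set.range tau2c)

theorem subgroupC_le_center : subgroupC n m lam ≤ Subgroup.center (Tau2Group n m lam) :=
  (Subgroup.closure_le _).2 <| Set.range_subset_iff.2 tau2c_mem_center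

instance : (subgroupC n m lam).Normal :=
  Subgroup.normal_of_le_center subgroupC_le_center

theorem exists_prodPow_tau2c_eq {z : Tau2Group n m lam} (hz : z ∈ subgroupC n m lam) :
    ∃ γ, prodPow tau2c γ = z :=
  exists_prodPow_eq_of_mem_closure commute_tau2c hz

theorem commute_mk_tau2a (i j : Fin n) :
    Commute (tau2a (lam := lam) i : Tau2Group n m lam ⧸ subgroupC n m lam)
      (tau2a (lam := lam) j) := by
  rcases lt_trichotomy i j with hij | rfl | hij
  · rw [QuotientGroup.commute_mk_iff, commutatorElement_tau2a hij]
    exact prodPow_mem (fun t => Subgroup.subset_closure (Set.mem_range_self t)) _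
  · exact Commute.refl _
  · rw [Commute.symm_iff, QuotientGroup.commute_mk_iff, commutatorElement_tau2a hij]
    exact prodPow_mem (fun t => Subgroup.subset_closure (Set.mem_range_self t)) _

theorem mk_mem_closure_range_tau2a (g : Tau2Group n m lam) :
    (g : Tau2Group n m lam ⧸ subgroupC n m lam) ∈ Subgroup.closure
      (Set.range fun i => (tau2a (lam := lam) i : Tau2Group n m lam ⧸ subgroupC n m lam)) := by
  have hg : g ∈ Subgroup.closure (Set.range PresentedGroup.of) :=
    (PresentedGroup.closure_range_of _).symm ▸ Subgroup.mem_top g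
  induction hg using Subgroup.closure_induction with
  | mem x hx =>
    obtain ⟨i | t, rfl⟩ := hx
    · exact Subgroup.subset_closure ⟨i, rfl⟩
    · convert (Subgroup.closure _).one_mem
      exact (QuotientGroup.eq_one_iff (tau2c t)).2 (Subgroup.subset_closure (Set.mem_range_self t))
  | one => exact one_mem _
  | mul x y _ _ hx hy => exact mul_mem hx hy
  | inv x _ hx => exact inv_mem hx

theorem exists_prodPow_mk_tau2a_eq (q : Tau2Group n m lam ⧸ subgroupC n m lam) :
    ∃ α, prodPow (fun i => (tau2a (lam := lam) i : Tau2Group n m lam ⧸ subgroupC n m lam)) α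
      = q := by
  obtain ⟨g, rfl⟩ := QuotientGroup.mk_surjective q
  exact exists_prodPow_eq_of_mem_closure commute_mk_tau2a (mk_mem_closure_range_tau2a g)

theorem exists_normalForm (g : Tau2Group n m lam) :
    ∃ α γ, prodPow tau2a α * prodPow tau2c γ = g := by
  obtain ⟨α, hα⟩ := exists_prodPow_mk_tau2a_eq (g : Tau2Group n m lam ⧸ subgroupC n m lam)
  have hmem : (prodPow tau2a α)⁻¹ * g ∈ subgroupC n m lam :=
    QuotientGroup.eq.1 <| (map_prodPow (QuotientGroup.mk' _) tau2a α).trans hα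
  obtain ⟨γ, hγ⟩ := exists_prodPow_tau2c_eq hmem
  exact ⟨α, γ, by rw [hγ, mul_inv_cancel_left]⟩

theorem commutatorElement_mem_subgroupC (g h : Tau2Group n m lam) :
    ⁅g, h⁆ ∈ subgroupC n m lam := by
  rw [← QuotientGroup.commute_mk_iff]
  obtain ⟨α, hα⟩ := exists_prodPow_mk_tau2a_eq (g : Tau2Group n m lam ⧸ subgroupC n m lam)
  obtain ⟨β, hβ⟩ := exists_prodPow_mk_tau2a_eq (h : Tau2Group n m lam ⧸ subgroupC n m lam)
  rw [← hα, ← hβ, Commute, SemiconjBy, ← prodPow_add commute_mk_tau2a,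
    ← prodPow_add commute_mk_tau2a, add_comm]

end Tau2Group

namespace Tau2Group
variable {n m : ℕ} {lam : Fin m → Fin n → Fin n → ℤ}

def cocycle (lam : Fin m → Fin n → Fin n → ℤ) : (Fin n → ℤ) →+ (Fin n → ℤ) →+ (Fin m → ℤ) :=
  AddMonoidHom.mk'
    (fun α => AddMonoidHom.mk'
      (fun β t => ∑ i, ∑ j, α i * β j * if i < j then lam t i j else 0)
      fun β β' => by ext t; simp only [Pi.add_apply, mul_add, add_mul, Finset.sum_add_distrib])
    fun α α' => AddMonoidHom.ext fun β => funext fun t => by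
      simp only [AddMonoidHom.mk'_apply, AddMonoidHom.add_apply, Pi.add_apply, add_mul,
        Finset.sum_add_distrib]

theorem cocycle_single (i j : Fin n) :
    cocycle lam (Pi.single i 1) (Pi.single j 1) = fun t => if i < j then lam t i j else 0 := by
  ext t
  simp only [cocycle, AddMonoidHom.mk'_apply, Pi.single_apply, ite_mul, one_mul, zero_mul]
  simp

theorem prodPow_mk_zero_single (γ : Fin m → ℤ) :
    prodPow (fun t => (⟨0, Pi.single t 1⟩ : CentralExtension (cocycle lam))) γ = ⟨0, γ⟩ := by
  rw [CentralExtension.prodPow_inr, ← pi_eq_sum_univ']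

def modelGen (lam : Fin m → Fin n → Fin n → ℤ) : Fin n ⊕ Fin m → CentralExtension (cocycle lam) :=
  Sum.elim (fun i => ⟨Pi.single i 1, 0⟩) (fun t => ⟨0, Pi.single t 1⟩)

theorem modelGen_rels : ∀ r ∈ tau2Rels n m lam, FreeGroup.lift (modelGen lam) r = 1 := by
  rintro r (⟨i, j, hij, rfl⟩ | ⟨i, t, rfl⟩ | ⟨t, s, rfl⟩)
  · rw [map_mul, map_inv, map_commutatorElement, map_prodPow, mul_inv_eq_one]
    simp only [Function.comp_def, FreeGroup.lift_apply_of, modelGen, Sum.elim_inl, Sum.elim_inr,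
      prodPow_mk_zero_single, CentralExtension.commutatorElement_eq, cocycle_single, if_pos hij,
      if_neg hij.not_gt]
    simp [Pi.zero_def]
  all_goals simp [modelGen, CentralExtension.commutatorElement_eq]

def toModel (lam : Fin m → Fin n → Fin n → ℤ) :
    Tau2Group n m lam →* CentralExtension (cocycle lam) :=
  PresentedGroup.toGroup modelGen_rels

@[simp]
theorem toModel_tau2a (i : Fin n) : toModel lam (tau2a i) = ⟨Pi.single i 1, 0⟩ :=
  PresentedGroup.toGroup.of _

@[simp]
theorem toModel_tau2c (t : Fin m) : toModel lam (tau2c t) = ⟨0, Pi.single t 1⟩ :=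
  PresentedGroup.toGroup.of _

theorem toModel_prodPow_tau2a_fst (α : Fin n → ℤ) : (toModel lam (prodPow tau2a α)).fst = α := by
  rw [map_prodPow, CentralExtension.fst_prodPow]
  simpa using (pi_eq_sum_univ' α).symm

theorem toModel_prodPow_tau2c (γ : Fin m → ℤ) : toModel lam (prodPow tau2c γ) = ⟨0, γ⟩ := by
  rw [map_prodPow, Function.comp_def]
  simpa using prodPow_mk_zero_single γ

theorem eq_of_toModel_normalForm_eq {α α' : Fin n → ℤ} {γ γ' : Fin m → ℤ}
    (h : toModel lam (prodPow tau2a α * prodPow tau2c γ)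
      = toModel lam (prodPow tau2a α' * prodPow tau2c γ')) : α = α' ∧ γ = γ' := by
  rw [map_mul, map_mul, toModel_prodPow_tau2c, toModel_prodPow_tau2c] at h
  obtain rfl : α = α' := by
    simpa [toModel_prodPow_tau2a_fst] using congrArg CentralExtension.fst h
  exact ⟨rfl, congrArg CentralExtension.snd (mul_left_cancel h)⟩

theorem toModel_injective : Function.Injective (toModel lam) := by
  intro g g' h
  obtain ⟨α, γ, rfl⟩ := exists_normalForm g
  obtain ⟨α', γ', rfl⟩ := exists_normalForm g'
  obtain ⟨rfl, rfl⟩ := eq_of_toModel_normalForm_eq h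
  rfl

theorem isTorsionFree : Monoid.IsTorsionFree (Tau2Group n m lam) := by
  intro g hg hfin
  obtain ⟨k, hk, hgk⟩ := isOfFinOrder_iff_pow_eq_one.1 hfin
  refine hg (toModel_injective ?_)
  rw [map_one]
  exact CentralExtension.eq_one_of_pow_eq_one hk.ne' (by rw [← map_pow, hgk, map_one])

end Tau2Group

theorem stmt2_general (n m : ℕ) (lam : Fin m → Fin n → Fin n → ℤ) :
    IsTau2 (Tau2Group n m lam) ∧ IsMalcevBasis (@tau2a n m lam) (@tau2c n m lam) := by
  refine ⟨⟨?_, Tau2Group.isTorsionFree, fun g h => ?_⟩, Tau2Group.tau2c_mem_center, ?_, fun g => ?_⟩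
  · exact Group.fg_iff.2 ⟨_, PresentedGroup.closure_range_of _, Set.finite_range _⟩
  · exact Tau2Group.subgroupC_le_center (Tau2Group.commutatorElement_mem_subgroupC g h)
  · rw [commutator_eq_closure, Subgroup.closure_le]
    rintro _ ⟨g, h, rfl⟩
    exact Tau2Group.commutatorElement_mem_subgroupC g h
  · obtain ⟨α, γ, rfl⟩ := Tau2Group.exists_normalForm g
    refine ⟨(α, γ), rfl, fun p hp => ?_⟩
    obtain ⟨h₁, h₂⟩ := Tau2Group.eq_of_toModel_normalForm_eq (congrArg (Tau2Group.toModel lam) hp)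
    exact Prod.ext h₁.symm h₂.symm

/-- For n ≥ 2, m ≥ 1 and any family λ, the τ₂-presented group
`G = G(n,m,λ)` is a τ₂-group (f.g., torsion-free, commutators central), and
(a₁,…,aₙ; c₁,…,cₘ) is a Malcev basis of G: the c's are central, G' ≤ ⟨C⟩ ≤ Z(G),
and every element of G has a unique representation a₁^{α₁}⋯aₙ^{αₙ}·c₁^{γ₁}⋯cₘ^{γₘ}
(equivalently, ⟨C⟩ is free abelian with basis {c₁,…,cₘ} and G/⟨C⟩ is free abelian
with basis the images of a₁,…,aₙ). -/
theorem stmt2 (n m : ℕ) (hn : 2 ≤ n) (hm : 1 ≤ m) (lam : Fin m → Fin n → Fin n → ℤ) :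
    IsTau2 (Tau2Group n m lam) ∧ IsMalcevBasis (@tau2a n m lam) (@tau2c n m lam) :=
  stmt2_general n m lam
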